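/- Let P̂ be an n×r real matrix with orthonormal columns that is μ-incoherent (every row satisfies ‖P̂⁽ⁱ⁾‖² ≤ μr/n), set Ψ := I − P̂P̂ᵀ, let T ⊆ {1,…,n} with |T| = s, and assume s·μ·r/n < 1. Then the matrix Ψ_TᵀΨ_T (with Ψ_T := Ψ I_T) is invertible, its smallest eigenvalue is at least 1 − s·μ·r/n, and for any l ∈ ℝⁿ, any x ∈ ℝⁿ supported on T, and x̂ := I_T (Ψ_TᵀΨ_T)⁻¹ Ψ_Tᵀ Ψ(x + l), the error satisfies ‖x̂ − x‖ ≤ ‖Ψ l‖ / (1 − s·μ·r/n). -/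

import Mathlib

/-!
Since `Ψ` is an orthogonal projection, the quadratic form of `Ψ_TᵀΨ_T` at `v` is
`‖u‖² − ‖P̂ᵀu‖²` with `u = I_T v`, and incoherence together with Cauchy–Schwarz gives
`‖P̂ᵀu‖² ≤ (sμr/n)‖u‖²`. A quadratic form bounded below by `c‖v‖²` with `c > 0` makes the
matrix invertible with `‖A⁻¹w‖ ≤ ‖w‖/c`. As `x` is supported on `T`, least squares recovers it
exactly from `Ψx`, so the error is `I_T (Ψ_TᵀΨ_T)⁻¹ I_Tᵀ Ψl`, and `I_T`, `I_Tᵀ` do not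
increase norms.
-/

open Matrix

/-- Squared Euclidean norm on a finite index type. -/
noncomputable def enormSq {ι : Type*} [Fintype ι] (v : ι → ℝ) : ℝ := ∑ i, (v i) ^ 2

/-- Euclidean norm on a finite index type. -/
noncomputable def eucEnorm {ι : Type*} [Fintype ι] (v : ι → ℝ) : ℝ :=
  Real.sqrt (∑ i, (v i) ^ 2)

/-- The `n × |T|` matrix whose columns are the columns of the `n × n`
identity matrix indexed by the entries of `T`. -/
def colSel {n : ℕ} (T : Finset (Fin n)) : Matrix (Fin n) {j : Fin n // j ∈ T} ℝ :=
  Matrix.of fun i j => if i = (j : Fin n) then 1 else 0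

section EuclideanNorm

variable {ι κ : Type*} [Fintype ι] [Fintype κ]

lemma enormSq_nonneg (v : ι → ℝ) : 0 ≤ enormSq v :=
  Finset.sum_nonneg fun _ _ => sq_nonneg _

lemma eucEnorm_eq_sqrt_enormSq (v : ι → ℝ) : eucEnorm v = √(enormSq v) := rfl

lemma dotProduct_self_eq_enormSq (v : ι → ℝ) : v ⬝ᵥ v = enormSq v := by
  simp only [dotProduct, enormSq, sq]

lemma dotProduct_le_eucEnorm_mul_eucEnorm (u w : ι → ℝ) :
    u ⬝ᵥ w ≤ eucEnorm u * eucEnorm w :=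
  Real.sum_mul_le_sqrt_mul_sqrt _ u w

lemma enormSq_mulVec_le (M : Matrix ι κ ℝ) (v : κ → ℝ) :
    enormSq (M *ᵥ v) ≤ (∑ i, ∑ j, M i j ^ 2) * enormSq v := by
  rw [enormSq, Finset.sum_mul]
  exact Finset.sum_le_sum fun i _ => Finset.sum_mul_sq_le_sq_mul_sq _ (M i) v

end EuclideanNorm

lemma dotProduct_transpose_mul_mulVec {ι κ R : Type*} [Fintype ι] [Fintype κ]
    [CommSemiring R] (M : Matrix κ ι R) (v : ι → R) :
    v ⬝ᵥ (Mᵀ * M) *ᵥ v = (M *ᵥ v) ⬝ᵥ (M *ᵥ v) := by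
  rw [← mulVec_mulVec, dotProduct_mulVec, vecMul_transpose]

section QuadraticFormBound

variable {ι : Type*} [Fintype ι] {A : Matrix ι ι ℝ} {c : ℝ}

lemma isUnit_det_of_le_dotProduct_mulVec [DecidableEq ι] (hc : 0 < c)
    (hA : ∀ v, c * enormSq v ≤ v ⬝ᵥ A *ᵥ v) : IsUnit A.det := by
  refine Ne.isUnit fun hdet => ?_
  obtain ⟨v, hv, hAv⟩ := exists_mulVec_eq_zero_iff.mpr hdet
  have hpos : 0 < enormSq v := by
    rw [← dotProduct_self_eq_enormSq]
    simpa using dotProduct_self_star_pos_iff.mpr hv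
  have := hA v
  rw [hAv, dotProduct_zero] at this
  nlinarith

lemma eucEnorm_le_eucEnorm_mulVec_div (hc : 0 < c)
    (hA : ∀ v, c * enormSq v ≤ v ⬝ᵥ A *ᵥ v) (u : ι → ℝ) :
    eucEnorm u ≤ eucEnorm (A *ᵥ u) / c := by
  have hu : 0 ≤ eucEnorm u := Real.sqrt_nonneg _
  have h : c * eucEnorm u * eucEnorm u ≤ eucEnorm (A *ᵥ u) * eucEnorm u := by
    rw [mul_assoc, ← sq, eucEnorm_eq_sqrt_enormSq, Real.sq_sqrt (enormSq_nonneg u),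
      mul_comm (eucEnorm _)]
    exact (hA u).trans (dotProduct_le_eucEnorm_mul_eucEnorm _ _)
  rw [le_div_iff₀ hc, mul_comm]
  rcases hu.eq_or_lt with h0 | hpos
  · rw [← h0, mul_zero]
    exact Real.sqrt_nonneg _
  · exact le_of_mul_le_mul_right h hpos

lemma eucEnorm_inv_mulVec_le [DecidableEq ι] (hc : 0 < c) (hA : ∀ v, c * enormSq v ≤ v ⬝ᵥ A *ᵥ v)
    (w : ι → ℝ) : eucEnorm (A⁻¹ *ᵥ w) ≤ eucEnorm w / c := by
  have hdet := isUnit_det_of_le_dotProduct_mulVec hc hA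
  simpa [mulVec_mulVec, mul_nonsing_inv _ hdet] using
    eucEnorm_le_eucEnorm_mulVec_div hc hA (A⁻¹ *ᵥ w)

end QuadraticFormBound

noncomputable def leastSquares {m ι : Type*} [Fintype m] [Fintype ι] [DecidableEq ι]
    (M : Matrix m ι ℝ) (b : m → ℝ) : ι → ℝ :=
  (Mᵀ * M)⁻¹ *ᵥ (Mᵀ *ᵥ b)

lemma leastSquares_mulVec_add {m ι : Type*} [Fintype m] [Fintype ι] [DecidableEq ι]
    (M : Matrix m ι ℝ) (hM : IsUnit (Mᵀ * M).det) (z : ι → ℝ) (y : m → ℝ) :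
    leastSquares M (M *ᵥ z + y) = z + leastSquares M y := by
  rw [leastSquares, leastSquares, mulVec_add, mulVec_add, mulVec_mulVec z Mᵀ M,
    mulVec_mulVec z, nonsing_inv_mul _ hM, one_mulVec]

section Projection

variable {m k : Type*} [Fintype m] [Fintype k] [DecidableEq m] [DecidableEq k] {P : Matrix m k ℝ}

lemma transpose_mul_self_one_sub_mul_transpose (hP : Pᵀ * P = 1) :
    (1 - P * Pᵀ)ᵀ * (1 - P * Pᵀ) = 1 - P * Pᵀ := by
  have hidem : IsIdempotentElem (P * Pᵀ) := by
    rw [IsIdempotentElem, Matrix.mul_assoc, ← Matrix.mul_assoc Pᵀ, hP, Matrix.one_mul]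
  rw [transpose_sub, transpose_one, transpose_mul, transpose_transpose]
  exact hidem.one_sub.eq

lemma dotProduct_one_sub_mul_transpose_mulVec_self (hP : Pᵀ * P = 1) (u : m → ℝ) :
    ((1 - P * Pᵀ) *ᵥ u) ⬝ᵥ ((1 - P * Pᵀ) *ᵥ u) = u ⬝ᵥ u - (Pᵀ *ᵥ u) ⬝ᵥ (Pᵀ *ᵥ u) := by
  rw [← dotProduct_transpose_mul_mulVec, transpose_mul_self_one_sub_mul_transpose hP,
    sub_mulVec, one_mulVec, dotProduct_sub, ← dotProduct_transpose_mul_mulVec, transpose_transpose]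

end Projection

section ColumnSelection

variable {n : ℕ} (T : Finset (Fin n))

lemma mul_colSel_apply {m : Type*} (M : Matrix m (Fin n) ℝ) (i : m) (j : {j // j ∈ T}) :
    (M * colSel T) i j = M i j := by
  simp only [mul_apply, colSel, of_apply, mul_ite, mul_one, mul_zero, Finset.sum_ite_eq',
    Finset.mem_univ, if_true]

lemma transpose_colSel_mul_colSel : (colSel T)ᵀ * colSel T = 1 := by
  ext i j
  rw [mul_colSel_apply, transpose_apply, one_apply, colSel, of_apply]
  exact if_congr (Subtype.ext_iff.symm.trans eq_comm) rfl rfl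

lemma colSel_mulVec_apply (z : {j // j ∈ T} → ℝ) (i : Fin n) :
    (colSel T *ᵥ z) i = if h : i ∈ T then z ⟨i, h⟩ else 0 := by
  rw [mulVec, dotProduct]
  split_ifs with h
  · rw [Fintype.sum_eq_single ⟨i, h⟩ fun j hj => ?_]
    · simp [colSel]
    · simpa [colSel] using fun hij => absurd (Subtype.ext hij.symm) hj
  · exact Finset.sum_eq_zero fun j _ => by
      simpa [colSel] using fun hij : i = j => absurd (hij ▸ j.2) h

lemma transpose_colSel_mulVec (y : Fin n → ℝ) : (colSel T)ᵀ *ᵥ y = fun j : {j // j ∈ T} => y j := by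
  ext j
  simp [mulVec, dotProduct, colSel]

lemma colSel_mulVec_transpose_colSel_mulVec {x : Fin n → ℝ} (hx : ∀ i, i ∉ T → x i = 0) :
    colSel T *ᵥ ((colSel T)ᵀ *ᵥ x) = x := by
  ext i
  rw [colSel_mulVec_apply, transpose_colSel_mulVec]
  split_ifs with h
  · rfl
  · exact (hx i h).symm

lemma enormSq_colSel_mulVec (z : {j // j ∈ T} → ℝ) : enormSq (colSel T *ᵥ z) = enormSq z := by
  rw [← dotProduct_self_eq_enormSq, ← dotProduct_transpose_mul_mulVec, transpose_colSel_mul_colSel,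
    one_mulVec, dotProduct_self_eq_enormSq]

lemma eucEnorm_transpose_colSel_mulVec_le (y : Fin n → ℝ) :
    eucEnorm ((colSel T)ᵀ *ᵥ y) ≤ eucEnorm y := by
  refine Real.sqrt_le_sqrt ?_
  rw [transpose_colSel_mulVec, Finset.sum_coe_sort T fun i => y i ^ 2]
  exact Finset.sum_le_sum_of_subset_of_nonneg (Finset.subset_univ T) fun i _ _ => sq_nonneg _

lemma enormSq_transpose_mulVec_colSel_mulVec_le {k : Type*} [Fintype k]
    (P : Matrix (Fin n) k ℝ) (v : {j // j ∈ T} → ℝ) :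
    enormSq (Pᵀ *ᵥ (colSel T *ᵥ v)) ≤ (∑ i ∈ T, ∑ j, P i j ^ 2) * enormSq v := by
  rw [mulVec_mulVec]
  refine (enormSq_mulVec_le _ v).trans_eq ?_
  simp_rw [mul_colSel_apply, transpose_apply]
  rw [Finset.sum_comm, Finset.sum_coe_sort T fun i => ∑ j, P i j ^ 2]

lemma one_sub_card_mul_mul_enormSq_le_dotProduct_mulVec {k : Type*} [Fintype k] [DecidableEq k]
    {P : Matrix (Fin n) k ℝ} (hP : Pᵀ * P = 1) {δ : ℝ} (hδ : ∀ i, ∑ j, P i j ^ 2 ≤ δ)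
    (v : {j // j ∈ T} → ℝ) :
    (1 - T.card * δ) * enormSq v ≤
      v ⬝ᵥ (((1 - P * Pᵀ) * colSel T)ᵀ * ((1 - P * Pᵀ) * colSel T)) *ᵥ v := by
  have hrows : ∑ i ∈ T, ∑ j, P i j ^ 2 ≤ T.card * δ := by
    simpa using Finset.sum_le_card_nsmul T _ δ fun i _ => hδ i
  have hPv := enormSq_transpose_mulVec_colSel_mulVec_le T P v
  rw [dotProduct_transpose_mul_mulVec, ← mulVec_mulVec,
    dotProduct_one_sub_mul_transpose_mulVec_self hP, dotProduct_self_eq_enormSq,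
    dotProduct_self_eq_enormSq, enormSq_colSel_mulVec]
  nlinarith [enormSq_nonneg v]

lemma colSel_mulVec_leastSquares_sub {m : Type*} [Fintype m] (B : Matrix m (Fin n) ℝ)
    (hB : IsUnit ((B * colSel T)ᵀ * (B * colSel T)).det) {x : Fin n → ℝ}
    (hx : ∀ i, i ∉ T → x i = 0) (l : m → ℝ) :
    colSel T *ᵥ leastSquares (B * colSel T) (B *ᵥ x + l) - x =
      colSel T *ᵥ leastSquares (B * colSel T) l := by
  have hBx : B *ᵥ x = (B * colSel T) *ᵥ ((colSel T)ᵀ *ᵥ x) := by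
    rw [← mulVec_mulVec, colSel_mulVec_transpose_colSel_mulVec T hx]
  rw [hBx, leastSquares_mulVec_add _ hB, mulVec_add, colSel_mulVec_transpose_colSel_mulVec T hx,
    add_sub_cancel_left]

end ColumnSelection

/-- If `P̂` is μ-incoherent, `Ψ = I − P̂P̂ᵀ`, `|T| = s` and `sμr/n < 1`, then
`Ψ_TᵀΨ_T` is invertible with smallest eigenvalue at least `1 − sμr/n`
(stated via the quadratic form), and the projected least-squares estimate
`x̂ = I_T (Ψ_TᵀΨ_T)⁻¹ Ψ_Tᵀ Ψ(x + l)` of an `x` supported on `T` satisfies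
`‖x̂ − x‖ ≤ ‖Ψ l‖ / (1 − sμr/n)`. -/
theorem projected_cs_error_bound {n r : ℕ}
    (Phat : Matrix (Fin n) (Fin r) ℝ) (hP : Phatᵀ * Phat = 1) (μ : ℝ)
    (hincoh : ∀ i : Fin n, (∑ j, (Phat i j) ^ 2) ≤ μ * r / n)
    (T : Finset (Fin n)) (s : ℕ) (hT : T.card = s)
    (hs : s * μ * r / n < 1)
    (l x : Fin n → ℝ) (hx : ∀ i : Fin n, i ∉ T → x i = 0) :
    ∀ (Ψ : Matrix (Fin n) (Fin n) ℝ), Ψ = 1 - Phat * Phatᵀ →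
    ∀ (ΨT : Matrix (Fin n) {j : Fin n // j ∈ T} ℝ), ΨT = Ψ * colSel T →
    IsUnit (ΨTᵀ * ΨT).det ∧
    (∀ v : {j : Fin n // j ∈ T} → ℝ,
      (1 - s * μ * r / n) * enormSq v ≤ v ⬝ᵥ (ΨTᵀ * ΨT).mulVec v) ∧
    (∀ xhat : Fin n → ℝ,
      xhat = (colSel T).mulVec
          ((ΨTᵀ * ΨT)⁻¹.mulVec (ΨTᵀ.mulVec (Ψ.mulVec (x + l)))) →
      eucEnorm (xhat - x) ≤ eucEnorm (Ψ.mulVec l) / (1 - s * μ * r / n)) := by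
  rintro _ rfl _ rfl
  set Ψ := 1 - Phat * Phatᵀ
  set ΨT := Ψ * colSel T
  have hc : 0 < 1 - s * μ * r / n := by linarith
  have hquad : ∀ v, (1 - s * μ * r / n) * enormSq v ≤ v ⬝ᵥ (ΨTᵀ * ΨT) *ᵥ v := fun v => by
    convert one_sub_card_mul_mul_enormSq_le_dotProduct_mulVec T hP hincoh v using 3
    rw [hT]; ring
  have hdet := isUnit_det_of_le_dotProduct_mulVec hc hquad
  refine ⟨hdet, hquad, fun xhat hxhat => ?_⟩
  have hΨl : ΨTᵀ *ᵥ (Ψ *ᵥ l) = (colSel T)ᵀ *ᵥ (Ψ *ᵥ l) := by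
    rw [transpose_mul, mulVec_mulVec, Matrix.mul_assoc, transpose_mul_self_one_sub_mul_transpose hP,
      ← mulVec_mulVec]
  calc eucEnorm (xhat - x) = eucEnorm (leastSquares ΨT (Ψ *ᵥ l)) := by
        rw [hxhat, mulVec_add, ← leastSquares, colSel_mulVec_leastSquares_sub T _ hdet hx,
          eucEnorm_eq_sqrt_enormSq, enormSq_colSel_mulVec, eucEnorm_eq_sqrt_enormSq]
    _ ≤ eucEnorm ((colSel T)ᵀ *ᵥ (Ψ *ᵥ l)) / (1 - s * μ * r / n) := by
        rw [leastSquares, hΨl]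
        exact eucEnorm_inv_mulVec_le hc hquad _
    _ ≤ eucEnorm (Ψ *ᵥ l) / (1 - s * μ * r / n) := by
        gcongr
        exact eucEnorm_transpose_colSel_mulVec_le T _
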